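/- arXiv:1810.02708 — 8 statements merged into one kernel-verified Lean document; each statement's English description precedes it below -/
import Mathlib

section
/- Let U be an n×n unitary matrix, let J = {1,...,n}, and let α, β be subsets of J. Then rank(U(α,β)) = rank(U(J\α, J\β)) + |α| + |β| - n, where U(α,β) denotes the submatrix of U with rows indexed by α and columns by β. -/
/-!
Split `U` into blocks `[[A, B], [C, D]]` along `α ⊔ αᶜ` and `β ⊔ βᶜ`. By the nullity theorem the
nullity of `A` equals that of the complementary block of `U⁻¹ = Uᴴ`, namely `Dᴴ`; rank–nullity for
`A` and `Dᴴ`, together with `rank Dᴴ = rank D`, gives the identity.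
-/

open Matrix Module
open scoped ComplexOrder

namespace Matrix

variable {K : Type*} [Field K] {m₁ m₂ n₁ n₂ : Type*}

theorem rank_add_finrank_ker [Fintype n₁] (A : Matrix m₁ n₁ K) :
    A.rank + finrank K (LinearMap.ker A.mulVecLin) = Fintype.card n₁ := by
  rw [rank, LinearMap.finrank_range_add_finrank_ker, finrank_fintype_fun_eq_card]

/-- `Z` maps `ker X` into `ker V`, injectively because `[X; Z]` has the left inverse `[P Q]`. -/
theorem finrank_ker_mulVecLin_le {p q : Type*} [Fintype m₁] [Fintype n₁] [DecidableEq n₁]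
    [Fintype p] {X : Matrix m₁ n₁ K} {Z : Matrix p n₁ K} {P : Matrix n₁ m₁ K} {Q : Matrix n₁ p K}
    {Y : Matrix q m₁ K} {V : Matrix q p K} (hPQ : P * X + Q * Z = 1) (hYV : Y * X + V * Z = 0) :
    finrank K (LinearMap.ker X.mulVecLin) ≤ finrank K (LinearMap.ker V.mulVecLin) := by
  have hmaps : ∀ x ∈ LinearMap.ker X.mulVecLin, Z.mulVecLin x ∈ LinearMap.ker V.mulVecLin := by
    intro x hx
    rw [LinearMap.mem_ker, mulVecLin_apply] at hx ⊢
    simpa [add_mulVec, ← mulVec_mulVec, hx] using congrArg (· *ᵥ x) hYV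
  refine LinearMap.finrank_le_finrank_of_injective (f := Z.mulVecLin.restrict hmaps) ?_
  rw [← LinearMap.ker_eq_bot, LinearMap.ker_eq_bot']
  rintro ⟨x, hx⟩ hZx
  rw [LinearMap.mem_ker, mulVecLin_apply] at hx
  have hZx : Z *ᵥ x = 0 := congrArg Subtype.val hZx
  ext1
  simpa [add_mulVec, ← mulVec_mulVec, hx, hZx] using (congrArg (· *ᵥ x) hPQ).symm

variable [Fintype m₁] [Fintype m₂] [Fintype n₁] [Fintype n₂]
  [DecidableEq m₁] [DecidableEq m₂] [DecidableEq n₁] [DecidableEq n₂]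

/-- The nullity theorem. -/
theorem finrank_ker_eq_of_fromBlocks_mul_eq_one {A : Matrix m₁ n₁ K} {B : Matrix m₁ n₂ K}
    {C : Matrix m₂ n₁ K} {D : Matrix m₂ n₂ K} {E : Matrix n₁ m₁ K} {F : Matrix n₁ m₂ K}
    {G : Matrix n₂ m₁ K} {H : Matrix n₂ m₂ K}
    (hNM : fromBlocks E F G H * fromBlocks A B C D = 1)
    (hMN : fromBlocks A B C D * fromBlocks E F G H = 1) :
    finrank K (LinearMap.ker A.mulVecLin) = finrank K (LinearMap.ker H.mulVecLin) := by
  rw [fromBlocks_multiply, ← fromBlocks_one, fromBlocks_inj] at hNM hMN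
  obtain ⟨hEF, -, hGH, -⟩ := hNM
  obtain ⟨-, hAF, -, hCF⟩ := hMN
  exact le_antisymm (finrank_ker_mulVecLin_le hEF hGH)
    (finrank_ker_mulVecLin_le (P := D) (Q := C) (by rwa [add_comm]) (by rwa [add_comm]))

theorem rank_add_card_eq_of_fromBlocks_mul_eq_one {A : Matrix m₁ n₁ K} {B : Matrix m₁ n₂ K}
    {C : Matrix m₂ n₁ K} {D : Matrix m₂ n₂ K} {E : Matrix n₁ m₁ K} {F : Matrix n₁ m₂ K}
    {G : Matrix n₂ m₁ K} {H : Matrix n₂ m₂ K}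
    (hNM : fromBlocks E F G H * fromBlocks A B C D = 1)
    (hMN : fromBlocks A B C D * fromBlocks E F G H = 1) :
    A.rank + Fintype.card m₂ = H.rank + Fintype.card n₁ := by
  have hnull := finrank_ker_eq_of_fromBlocks_mul_eq_one hNM hMN
  have hA := rank_add_finrank_ker A
  have hH := rank_add_finrank_ker H
  omega

theorem rank_submatrix_inl_add_card_eq {𝕜 ι : Type*} [Field 𝕜] [PartialOrder 𝕜] [StarRing 𝕜]
    [StarOrderedRing 𝕜] [Fintype ι] [DecidableEq ι] {U : Matrix ι ι 𝕜}
    (hU : U ∈ unitaryGroup ι 𝕜) (e : m₁ ⊕ m₂ ≃ ι) (f : n₁ ⊕ n₂ ≃ ι) :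
    (U.submatrix (e ∘ Sum.inl) (f ∘ Sum.inl)).rank + Fintype.card m₂ =
      (U.submatrix (e ∘ Sum.inr) (f ∘ Sum.inr)).rank + Fintype.card n₁ := by
  have hM := fromBlocks_toBlocks (U.submatrix e f)
  have hN : fromBlocks _ _ _ (U.submatrix (e ∘ Sum.inr) (f ∘ Sum.inr))ᴴ = Uᴴ.submatrix f e :=
    fromBlocks_toBlocks (Uᴴ.submatrix f e)
  have hNM : Uᴴ.submatrix f e * U.submatrix e f = 1 := by
    rw [submatrix_mul_equiv, ← star_eq_conjTranspose, hU.1, submatrix_one_equiv]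
  have hMN : U.submatrix e f * Uᴴ.submatrix f e = 1 := by
    rw [submatrix_mul_equiv, ← star_eq_conjTranspose, hU.2, submatrix_one_equiv]
  rw [← hM, ← hN] at hNM hMN
  rw [← rank_conjTranspose (U.submatrix (e ∘ Sum.inr) (f ∘ Sum.inr))]
  exact rank_add_card_eq_of_fromBlocks_mul_eq_one hNM hMN

end Matrix

def Finset.sumComplEquiv {ι : Type*} [Fintype ι] [DecidableEq ι] (s : Finset ι) :
    s ⊕ (sᶜ : Finset ι) ≃ ι :=
  (Equiv.sumCongr (Equiv.refl s) (Equiv.subtypeEquivRight fun _ => Finset.mem_compl)).trans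
    (Equiv.sumCompl (· ∈ s))

theorem Finset.sumComplEquiv_comp_inl {ι : Type*} [Fintype ι] [DecidableEq ι] (s : Finset ι) :
    s.sumComplEquiv ∘ Sum.inl = (↑) :=
  rfl

theorem Finset.sumComplEquiv_comp_inr {ι : Type*} [Fintype ι] [DecidableEq ι] (s : Finset ι) :
    s.sumComplEquiv ∘ Sum.inr = (↑) :=
  rfl

theorem stmt_0 {n : ℕ} (U : Matrix (Fin n) (Fin n) ℂ)
    (hU : U ∈ Matrix.unitaryGroup (Fin n) ℂ) (α β : Finset (Fin n)) :
    (U.submatrix (fun i : {x // x ∈ α} => (i : Fin n))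
        (fun j : {x // x ∈ β} => (j : Fin n))).rank + n =
    (U.submatrix (fun i : {x // x ∈ αᶜ} => (i : Fin n))
        (fun j : {x // x ∈ βᶜ} => (j : Fin n))).rank + α.card + β.card := by
  have key := rank_submatrix_inl_add_card_eq hU α.sumComplEquiv β.sumComplEquiv
  simp only [Finset.sumComplEquiv_comp_inl, Finset.sumComplEquiv_comp_inr, Fintype.card_coe,
    Finset.card_compl, Fintype.card_fin] at key
  have hα : α.card ≤ n := by simpa using α.card_le_univ
  -- `key` mentions `Subtype.val` where the goal has `fun i => ↑i`; `omega` needs equal atoms.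
  eta_reduce
  omega
end

section
/- Let U be an n×n unitary matrix. Then for every h with 1 ≤ h ≤ n-1, rank(U(1:h, h+1:n)) = rank(U(h+1:n, 1:h)). -/
/-!
Write `U = [[A, B], [C, D]]` with `A` the leading `h × h` block. Unitarity gives
`B Bᴴ = 1 - A Aᴴ` and `Cᴴ C = 1 - Aᴴ A`, so `rank B = rank (1 - A Aᴴ)` and
`rank C = rank (1 - Aᴴ A)`. Finally `1 - X Y` and `1 - Y X` always have kernels of the same
dimension: `Y` maps the first kernel injectively into the second, with inverse `X`.
-/

open Matrix ComplexOrder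

namespace Matrix

section OneSubMul

variable {K m n : Type*} [Field K] [Fintype m] [Fintype n] [DecidableEq m] [DecidableEq n]

theorem mem_ker_one_sub_mulVecLin (P : Matrix m m K) (v : m → K) :
    v ∈ LinearMap.ker (1 - P).mulVecLin ↔ P *ᵥ v = v := by
  rw [LinearMap.mem_ker, mulVecLin_apply, sub_mulVec, one_mulVec, sub_eq_zero, eq_comm]

theorem finrank_ker_one_sub_mul_le (X : Matrix m n K) (Y : Matrix n m K) :
    Module.finrank K (LinearMap.ker (1 - X * Y).mulVecLin) ≤
      Module.finrank K (LinearMap.ker (1 - Y * X).mulVecLin) := by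
  have maps_to : ∀ v ∈ LinearMap.ker (1 - X * Y).mulVecLin,
      Y.mulVecLin v ∈ LinearMap.ker (1 - Y * X).mulVecLin := by
    intro v hv
    rw [mem_ker_one_sub_mulVecLin] at hv ⊢
    rw [mulVecLin_apply, mulVec_mulVec, Matrix.mul_assoc, ← mulVec_mulVec, hv]
  refine LinearMap.finrank_le_finrank_of_injective (f := Y.mulVecLin.restrict maps_to) ?_
  rintro ⟨v, hv⟩ ⟨w, hw⟩ hvw
  have hYvw : Y *ᵥ v = Y *ᵥ w := congrArg Subtype.val hvw
  rw [mem_ker_one_sub_mulVecLin, ← mulVec_mulVec] at hv hw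
  exact Subtype.ext (hv.symm.trans ((congrArg (X *ᵥ ·) hYvw).trans hw))

theorem finrank_ker_one_sub_mul_comm (X : Matrix m n K) (Y : Matrix n m K) :
    Module.finrank K (LinearMap.ker (1 - X * Y).mulVecLin) =
      Module.finrank K (LinearMap.ker (1 - Y * X).mulVecLin) :=
  (finrank_ker_one_sub_mul_le X Y).antisymm (finrank_ker_one_sub_mul_le Y X)

theorem rank_one_sub_mul_comm (X Y : Matrix n n K) : (1 - X * Y).rank = (1 - Y * X).rank := by
  have hXY := LinearMap.finrank_range_add_finrank_ker (1 - X * Y).mulVecLin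
  have hYX := LinearMap.finrank_range_add_finrank_ker (1 - Y * X).mulVecLin
  rw [finrank_ker_one_sub_mul_comm] at hXY
  exact Nat.add_right_cancel (hXY.trans hYX.symm)

end OneSubMul

section Unitary

variable {R m n : Type*} [Fintype m] [Fintype n] [DecidableEq m] [DecidableEq n]
  [CommRing R] [StarRing R]

theorem submatrix_mem_unitaryGroup {U : Matrix n n R}
    (hU : U ∈ unitaryGroup n R) (e : m ≃ n) : U.submatrix e e ∈ unitaryGroup m R := by
  rw [mem_unitaryGroup_iff, star_eq_conjTranspose, conjTranspose_submatrix,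
    submatrix_mul_equiv, ← star_eq_conjTranspose, mem_unitaryGroup_iff.mp hU, submatrix_one_equiv]

variable {V : Matrix (m ⊕ n) (m ⊕ n) R}

theorem toBlocks₁₂_mul_conjTranspose_of_mem_unitaryGroup (hV : V ∈ unitaryGroup (m ⊕ n) R) :
    V.toBlocks₁₂ * V.toBlocks₁₂ᴴ = 1 - V.toBlocks₁₁ * V.toBlocks₁₁ᴴ := by
  have hVV := mem_unitaryGroup_iff.mp hV
  rw [star_eq_conjTranspose, ← fromBlocks_toBlocks V, fromBlocks_conjTranspose,
    fromBlocks_multiply, ← fromBlocks_one, fromBlocks_inj] at hVV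
  exact eq_sub_of_add_eq' hVV.1

theorem conjTranspose_mul_toBlocks₂₁_of_mem_unitaryGroup (hV : V ∈ unitaryGroup (m ⊕ n) R) :
    V.toBlocks₂₁ᴴ * V.toBlocks₂₁ = 1 - V.toBlocks₁₁ᴴ * V.toBlocks₁₁ := by
  have hVV := mem_unitaryGroup_iff'.mp hV
  rw [star_eq_conjTranspose, ← fromBlocks_toBlocks V, fromBlocks_conjTranspose,
    fromBlocks_multiply, ← fromBlocks_one, fromBlocks_inj] at hVV
  exact eq_sub_of_add_eq' hVV.1

end Unitary

section StarOrderedField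

variable {R m n : Type*} [Fintype m] [Fintype n] [DecidableEq m] [DecidableEq n]
  [Field R] [PartialOrder R] [StarRing R] [StarOrderedRing R]

theorem rank_toBlocks₁₂_eq_rank_toBlocks₂₁_of_mem_unitaryGroup {V : Matrix (m ⊕ n) (m ⊕ n) R}
    (hV : V ∈ unitaryGroup (m ⊕ n) R) : V.toBlocks₁₂.rank = V.toBlocks₂₁.rank := by
  rw [← rank_self_mul_conjTranspose, ← rank_conjTranspose_mul_self V.toBlocks₂₁,
    toBlocks₁₂_mul_conjTranspose_of_mem_unitaryGroup hV,
    conjTranspose_mul_toBlocks₂₁_of_mem_unitaryGroup hV, rank_one_sub_mul_comm]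

end StarOrderedField

end Matrix

theorem stmt_1 {n : ℕ} (U : Matrix (Fin n) (Fin n) ℂ)
    (hU : U ∈ Matrix.unitaryGroup (Fin n) ℂ)
    (h : ℕ) (h2 : h ≤ n - 1) :
    (U.submatrix (fun i : Fin h => (⟨(i : ℕ), by have := i.isLt; omega⟩ : Fin n))
        (fun j : Fin (n - h) => (⟨h + (j : ℕ), by have := j.isLt; omega⟩ : Fin n))).rank =
    (U.submatrix (fun i : Fin (n - h) => (⟨h + (i : ℕ), by have := i.isLt; omega⟩ : Fin n))
        (fun j : Fin h => (⟨(j : ℕ), by have := j.isLt; omega⟩ : Fin n))).rank := by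
  let e : Fin h ⊕ Fin (n - h) ≃ Fin n := finSumFinEquiv.trans (finCongr (by omega))
  have hV := submatrix_mem_unitaryGroup hU e
  have hB : U.submatrix (fun i : Fin h => (⟨(i : ℕ), by have := i.isLt; omega⟩ : Fin n))
        (fun j : Fin (n - h) => (⟨h + (j : ℕ), by have := j.isLt; omega⟩ : Fin n)) =
      (U.submatrix e e).toBlocks₁₂ := by
    ext i j; rfl
  have hC : U.submatrix (fun i : Fin (n - h) => (⟨h + (i : ℕ), by have := i.isLt; omega⟩ : Fin n))
        (fun j : Fin h => (⟨(j : ℕ), by have := j.isLt; omega⟩ : Fin n)) =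
      (U.submatrix e e).toBlocks₂₁ := by
    ext i j; rfl
  rw [hB, hC]
  exact rank_toBlocks₁₂_eq_rank_toBlocks₂₁_of_mem_unitaryGroup hV
end

section
/- Let X be an m×k complex matrix of full rank k with k < m, and let H be a unitary k-upper Hessenberg matrix with H·X = T where T(1:k,1:k) is upper triangular nonsingular and T(k+1:m,:) = 0. Then the product of the moduli of the outermost entries of H satisfies ∏_{i=1}^{m-k} |h_{i+k,i}| = |det(X(m-k+1:m, 1:k))| / ∏_{i=1}^k σ_i(X), where σ_i(X) are the singular values of X. -/
/-!
Since `H` is unitary, `X = Hᴴ T`, and as `T` vanishes below its top `k × k` block `R` this gives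
`Xᴴ X = Rᴴ R` and `X(m-k+1:m, :) = Bᴴ R` with `B = H(1:k, m-k+1:m)`; so the right-hand side is
`|det B|`. Because `H` is `k`-Hessenberg, the complementary block `C = H(k+1:m, 1:m-k)` is upper
triangular with diagonal `h_{i+k,i}`. Finally, complementary minors of a unitary matrix have equal
modulus: with `A = H(1:k, 1:m-k)`, unitarity gives `B Bᴴ = 1 - A Aᴴ` and `Cᴴ C = 1 - Aᴴ A`, which
have equal determinants by Sylvester's identity.
-/

open scoped Matrix

namespace Matrix

variable {𝕜 : Type*} [RCLike 𝕜]

theorem det_conjTranspose_mul_self {n : Type*} [Fintype n] [DecidableEq n] (M : Matrix n n 𝕜) :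
    (Mᴴ * M).det = ((‖M.det‖ ^ 2 : ℝ) : 𝕜) := by
  rw [det_mul, det_conjTranspose, RCLike.star_def, RCLike.conj_mul, RCLike.ofReal_pow]

theorem det_mul_conjTranspose_self {n : Type*} [Fintype n] [DecidableEq n] (M : Matrix n n 𝕜) :
    (M * Mᴴ).det = ((‖M.det‖ ^ 2 : ℝ) : 𝕜) := by
  rw [det_mul, det_conjTranspose, RCLike.star_def, RCLike.mul_conj, RCLike.ofReal_pow]

theorem norm_det_toBlocks₁₂_eq_norm_det_toBlocks₂₁ {κ ν : Type*} [Fintype κ] [DecidableEq κ]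
    [Fintype ν] [DecidableEq ν] {V : Matrix (κ ⊕ ν) (ν ⊕ κ) 𝕜} (h₁ : Vᴴ * V = 1)
    (h₂ : V * Vᴴ = 1) : ‖V.toBlocks₁₂.det‖ = ‖V.toBlocks₂₁.det‖ := by
  rw [← fromBlocks_toBlocks V, fromBlocks_conjTranspose, fromBlocks_multiply,
    ← fromBlocks_one] at h₁ h₂
  have hrow := congrArg toBlocks₁₁ h₂
  have hcol := congrArg toBlocks₁₁ h₁
  simp only [toBlocks_fromBlocks₁₁] at hrow hcol
  have hdet : (V.toBlocks₁₂ * V.toBlocks₁₂ᴴ).det = (V.toBlocks₂₁ᴴ * V.toBlocks₂₁).det := by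
    rw [eq_sub_of_add_eq' hrow, eq_sub_of_add_eq' hcol, det_one_sub_mul_comm]
  rw [det_mul_conjTranspose_self, det_conjTranspose_mul_self, RCLike.ofReal_inj] at hdet
  exact (pow_left_inj₀ (norm_nonneg _) (norm_nonneg _) two_ne_zero).mp hdet

theorem norm_det_submatrix_castLE_eq_norm_det_submatrix_addNat {m k : ℕ} (hk : k ≤ m)
    {U : Matrix (Fin m) (Fin m) 𝕜} (hU : U ∈ unitaryGroup (Fin m) 𝕜) :
    ‖(U.submatrix (Fin.castLE hk) fun j : Fin k => ⟨m - k + j, by omega⟩).det‖ =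
      ‖(U.submatrix (fun i : Fin (m - k) => ⟨i + k, by omega⟩) (Fin.castLE (m.sub_le k))).det‖ := by
  let er : Fin k ⊕ Fin (m - k) ≃ Fin m := finSumFinEquiv.trans (finCongr (by omega))
  let ec : Fin (m - k) ⊕ Fin k ≃ Fin m := finSumFinEquiv.trans (finCongr (by omega))
  have h := norm_det_toBlocks₁₂_eq_norm_det_toBlocks₂₁ (V := U.submatrix er ec)
    (by rw [conjTranspose_submatrix, submatrix_mul_equiv, ← star_eq_conjTranspose, hU.1,
      submatrix_one_equiv])
    (by rw [conjTranspose_submatrix, submatrix_mul_equiv, ← star_eq_conjTranspose, hU.2,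
      submatrix_one_equiv])
  convert h using 4 <;> ext <;>
    exact congrArg₂ U (Fin.ext (by simp [er, add_comm])) (Fin.ext (by simp [ec, add_comm]))

theorem det_submatrix_addNat_castLE_of_hessenberg {R : Type*} [CommRing R] {m k : ℕ}
    (hk : k ≤ m) {H : Matrix (Fin m) (Fin m) R}
    (hH : ∀ i j : Fin m, (j : ℕ) + k < (i : ℕ) → H i j = 0) :
    (H.submatrix (fun i : Fin (m - k) => ⟨i + k, by omega⟩) (Fin.castLE (m.sub_le k))).det =
      ∏ i : Fin (m - k), H ⟨i + k, by omega⟩ (Fin.castLE (m.sub_le k) i) :=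
  det_of_isUpperTriangular fun i j hij => hH _ _ (by simpa using hij)

theorem mul_eq_mul_submatrix_of_eq_zero {R ι κ ν α : Type*} [Fintype ι] [Fintype α]
    [NonUnitalNonAssocSemiring R] (M : Matrix ν ι R) (T : Matrix ι κ R) {f : α → ι}
    (hf : f.Injective) (hT : ∀ i ∉ Set.range f, T i = 0) :
    M * T = M.submatrix id f * T.submatrix f id := by
  ext a b
  exact (Fintype.sum_of_injective f hf _ _ (fun i hi => by simp [hT i hi]) fun _ => rfl).symm

end Matrix

theorem stmt_4 {m k : ℕ} (hk : k < m) (X : Matrix (Fin m) (Fin k) ℂ)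
    (H : Matrix (Fin m) (Fin m) ℂ) (hH : H ∈ Matrix.unitaryGroup (Fin m) ℂ)
    (hHess : ∀ i j : Fin m, (j : ℕ) + k < (i : ℕ) → H i j = 0)
    (T : Matrix (Fin m) (Fin k) ℂ) (hT : H * X = T)
    (hTbot : ∀ i : Fin m, k ≤ (i : ℕ) → ∀ j, T i j = 0)
    (hTinv : IsUnit (Matrix.det (Matrix.of fun i j : Fin k => T (Fin.castLE hk.le i) j))) :
    ∏ i : Fin (m - k),
        Norm.norm (H ⟨(i : ℕ) + k, by have := i.isLt; omega⟩
          ⟨(i : ℕ), by have := i.isLt; omega⟩) =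
      Norm.norm (Matrix.det (Matrix.of fun i j : Fin k =>
          X ⟨m - k + (i : ℕ), by have := i.isLt; omega⟩ j)) /
        Real.sqrt (Norm.norm (Matrix.det (Xᴴ * X))) := by
  set R := T.submatrix (Fin.castLE hk.le) id
  have hTR : ∀ {n : ℕ} (M : Matrix (Fin n) (Fin m) ℂ),
      M * T = M.submatrix id (Fin.castLE hk.le) * R :=
    fun M => Matrix.mul_eq_mul_submatrix_of_eq_zero M T (Fin.castLE_injective _) fun i hi =>
      funext (hTbot i (by by_contra! h; exact hi ⟨⟨i, h⟩, rfl⟩))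
  have hXT : X = Hᴴ * T := by
    rw [← hT, ← Matrix.mul_assoc, ← Matrix.star_eq_conjTranspose, hH.1, Matrix.one_mul]
  have hXX : Xᴴ * X = Rᴴ * R := by
    rw [hXT, Matrix.conjTranspose_mul, Matrix.conjTranspose_conjTranspose, Matrix.mul_assoc,
      ← Matrix.mul_assoc H, ← Matrix.star_eq_conjTranspose, hH.2, Matrix.one_mul, hTR,
      ← Matrix.conjTranspose_submatrix]
  have hXbot : X.submatrix (fun i : Fin k => ⟨m - k + i, by omega⟩) id =
      (H.submatrix (Fin.castLE hk.le) fun j : Fin k => ⟨m - k + j, by omega⟩)ᴴ * R := by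
    rw [hXT, hTR, Matrix.submatrix_mul _ _ _ id _ Function.bijective_id,
      Matrix.conjTranspose_submatrix]
    rfl
  have hRne : ‖R.det‖ ≠ 0 := norm_ne_zero_iff.mpr hTinv.ne_zero
  calc _ = ‖(H.submatrix (Fin.castLE hk.le) fun j : Fin k => ⟨m - k + j, by omega⟩).det‖ := by
        rw [Matrix.norm_det_submatrix_castLE_eq_norm_det_submatrix_addNat hk.le hH,
          Matrix.det_submatrix_addNat_castLE_of_hessenberg hk.le hHess, norm_prod]; rfl
    _ = _ := by
        change _ = ‖(X.submatrix _ id).det‖ / _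
        rw [hXbot, hXX, Matrix.det_mul, Matrix.det_conjTranspose,
          Matrix.det_conjTranspose_mul_self, norm_mul, norm_star, RCLike.norm_ofReal, abs_sq,
          Real.sqrt_sq (norm_nonneg _), mul_div_cancel_right₀ _ hRne]
end

section
/- Let X be an m×k complex matrix of full rank k with k < m, let H be unitary k-upper Hessenberg with H·X = T (T upper triangular as a tall matrix with nonsingular leading k×k block), and let s be the maximal index such that rank(X(s:m, 1:k)) = k. Then the outermost entries of H satisfy h_{i+k,i} ≠ 0 for i = 1, ..., s-1. -/
/-!
Indices are 0-based, so the claim is `H (j + k) j ≠ 0` whenever `j + 1 < s`.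

Suppose `H (j + k) j = 0`. By the Hessenberg structure, rows `k, k+1, …` of `H` restricted to
columns `0, …, j` form an upper triangular block with `H (j + k) j` as its last diagonal entry,
hence a singular one. So there is a nonzero `w` supported on `0, …, j` with `H w` vanishing from
coordinate `k` on. Such a vector is `T c` for some `c`, hence `w = Hᴴ T c = X c`. Then `c ≠ 0`,
but the trailing rows `X(s-1:m, :)` kill `c` because `w` vanishes there, contradicting their
full column rank.
-/

open scoped Matrix

def VanishesFrom {M : Type*} [Zero M] {m : ℕ} (k : ℕ) (v : Fin m → M) : Prop :=
  ∀ i : Fin m, k ≤ (i : ℕ) → v i = 0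

namespace Matrix

variable {R : Type*} [CommRing R]

theorem mulVec_injective_of_rank_eq_card [Nontrivial R] {m n : Type*} [Fintype n]
    {B : Matrix m n R} (hB : B.rank = Fintype.card n) : Function.Injective B.mulVec := by
  rw [mulVec_injective_iff, linearIndependent_iff_card_eq_finrank_span, ← hB,
    rank_eq_finrank_span_cols, Set.finrank]

theorem IsUpperTriangular.exists_mulVec_eq_zero [IsDomain R] {n : Type*} [Fintype n]
    [DecidableEq n] [LinearOrder n] {M : Matrix n n R} (hM : M.IsUpperTriangular) {i : n}
    (hi : M i i = 0) :
    ∃ v ≠ 0, M *ᵥ v = 0 :=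
  exists_mulVec_eq_zero_iff.mpr <| by
    rw [det_of_isUpperTriangular hM]
    exact Finset.prod_eq_zero (Finset.mem_univ i) hi

theorem exists_mulVec_eq_of_isUnit_det_top {m k : ℕ} (hk : k ≤ m) (T : Matrix (Fin m) (Fin k) R)
    (hTbot : ∀ i : Fin m, k ≤ (i : ℕ) → ∀ j, T i j = 0)
    (hTinv : IsUnit (Matrix.det (Matrix.of fun i j : Fin k => T (Fin.castLE hk i) j)))
    (v : Fin m → R) (hv : VanishesFrom k v) :
    ∃ c, T *ᵥ c = v := by
  set A : Matrix (Fin k) (Fin k) R := of fun i j => T (Fin.castLE hk i) j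
  set u : Fin k → R := fun i => v (Fin.castLE hk i)
  refine ⟨A⁻¹ *ᵥ u, funext fun p => ?_⟩
  by_cases hp : (p : ℕ) < k
  · have hAc : A *ᵥ (A⁻¹ *ᵥ u) = u := by
      rw [mulVec_mulVec, mul_nonsing_inv A hTinv, one_mulVec]
    exact congrFun hAc ⟨p, hp⟩
  · rw [hv p (not_lt.mp hp), mulVec, dotProduct]
    exact Finset.sum_eq_zero fun q _ => by rw [hTbot p (not_lt.mp hp) q, zero_mul]

theorem exists_ne_zero_vanishesFrom_mulVec_of_hessenberg [IsDomain R] {m k : ℕ}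
    (H : Matrix (Fin m) (Fin m) R)
    (hHess : ∀ i j : Fin m, (j : ℕ) + k < (i : ℕ) → H i j = 0)
    (i j : Fin m) (hij : (i : ℕ) = j + k) (hzero : H i j = 0) :
    ∃ w ≠ 0, VanishesFrom (j + 1) w ∧ VanishesFrom k (H *ᵥ w) := by
  have hjk : (j : ℕ) + k < m := hij ▸ i.isLt
  let e : Fin (j + 1) → Fin m := Fin.castLE j.isLt
  have he : Function.Injective e := Fin.castLE_injective _
  let L : Matrix (Fin (j + 1)) (Fin (j + 1)) R :=
    H.submatrix (fun a => ⟨a + k, by omega⟩) e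
  have hL : L.IsUpperTriangular := fun a b (hab : b < a) => hHess _ _ (by
    simp only [e, Fin.val_castLE]
    exact Nat.add_lt_add_right hab k)
  have hlast : L (Fin.last j) (Fin.last j) = 0 := by
    simp only [L, submatrix_apply]
    convert hzero using 2 <;> exact Fin.ext (by simp [e, hij])
  obtain ⟨z, hz0, hLz⟩ := hL.exists_mulVec_eq_zero hlast
  refine ⟨Function.extend e z 0, fun h => hz0 (funext fun b => ?_), fun r hr => ?_,
    fun p hp => ?_⟩
  · simpa [he.extend_apply] using congrFun h (e b)
  · refine Function.extend_apply' _ _ _ ?_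
    rintro ⟨b, rfl⟩
    simp only [e, Fin.val_castLE] at hr
    omega
  have hsum : (H *ᵥ Function.extend e z 0) p = ∑ b, H p (e b) * z b :=
    (Fintype.sum_of_injective e he _ _
      (fun r hr => by rw [Function.extend_apply' _ _ _ hr, Pi.zero_apply, mul_zero])
      (fun b => by rw [he.extend_apply])).symm
  rw [hsum]
  by_cases hpj : (p : ℕ) ≤ j + k
  · have hrow : (⟨(p : ℕ) - k + k, by omega⟩ : Fin m) = p := Fin.ext (Nat.sub_add_cancel hp)
    simpa [L, mulVec, dotProduct, hrow] using congrFun hLz ⟨p - k, by omega⟩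
  · exact Finset.sum_eq_zero fun b _ => by
      rw [hHess _ _ (by simp only [e, Fin.val_castLE]; omega), zero_mul]

end Matrix

theorem stmt_5 {m k : ℕ} (hk : k < m) (X : Matrix (Fin m) (Fin k) ℂ)
    (H : Matrix (Fin m) (Fin m) ℂ) (hH : H ∈ Matrix.unitaryGroup (Fin m) ℂ)
    (hHess : ∀ i j : Fin m, (j : ℕ) + k < (i : ℕ) → H i j = 0)
    (T : Matrix (Fin m) (Fin k) ℂ) (hT : H * X = T)
    (hTbot : ∀ i : Fin m, k ≤ (i : ℕ) → ∀ j, T i j = 0)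
    (hTinv : IsUnit (Matrix.det (Matrix.of fun i j : Fin k => T (Fin.castLE hk.le i) j)))
    (s : ℕ) (hs1 : 1 ≤ s) (hsm : s ≤ m)
    (hrank : (Matrix.of fun (i : Fin (m - s + 1)) (j : Fin k) =>
        X ⟨s - 1 + (i : ℕ), by have := i.isLt; omega⟩ j).rank = k) :
    ∀ i j : Fin m, (i : ℕ) = (j : ℕ) + k → (j : ℕ) + 1 < s → H i j ≠ 0 := by
  intro i j hij hjs hzero
  obtain ⟨w, hw0, hw, hHw⟩ :=
    Matrix.exists_ne_zero_vanishesFrom_mulVec_of_hessenberg H hHess i j hij hzero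
  obtain ⟨c, hTc⟩ := Matrix.exists_mulVec_eq_of_isUnit_det_top hk.le T hTbot hTinv _ hHw
  have hXc : X *ᵥ c = w := calc
    X *ᵥ c = (star H * H) *ᵥ (X *ᵥ c) := by rw [hH.1, Matrix.one_mulVec]
    _ = star H *ᵥ ((H * X) *ᵥ c) := by
      rw [Matrix.mulVec_mulVec, Matrix.mulVec_mulVec, Matrix.mul_assoc]
    _ = (star H * H) *ᵥ w := by rw [hT, hTc, Matrix.mulVec_mulVec]
    _ = w := by rw [hH.1, Matrix.one_mulVec]
  have hc0 : c ≠ 0 := by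
    rintro rfl
    exact hw0 (by rw [← hXc, Matrix.mulVec_zero])
  refine hc0 (Matrix.mulVec_injective_of_rank_eq_card (by rw [hrank, Fintype.card_fin]) ?_)
  funext r
  rw [Matrix.mulVec_zero]
  exact (congrFun hXc _).trans (hw _ (by simp only; omega))
end

section
/- With Û = [[U − U·Ỹ·Ỹᴴ, U·Ỹ],[Ỹᴴ, 0_k]] where Ỹ ∈ ℂ^{n×k} has orthonormal columns (ỸᴴỸ = I_k) and U is n×n unitary, the (n+k)×(n+k) matrix Û is unitary. -/
/-!
Û factors as `fromBlocks U 0 0 1 * R` with `R = [[1 - Y Yᴴ, Y], [Yᴴ, 0]]`. Since `Y Yᴴ` is an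
orthogonal projection fixing the columns of `Y`, `R` is a Hermitian involution, hence unitary,
and Û is a product of two unitaries.
-/

open scoped Matrix

theorem IsSelfAdjoint.mem_unitary_of_mul_self_eq_one {R : Type*} [Monoid R] [StarMul R] {a : R}
    (ha : IsSelfAdjoint a) (h : a * a = 1) : a ∈ unitary R :=
  Unitary.mem_iff.mpr ⟨by rw [ha.star_eq, h], by rw [ha.star_eq, h]⟩

namespace Matrix

variable {m n α : Type*} [Fintype m] [Fintype n] [DecidableEq m] [DecidableEq n]
  [CommRing α] [StarRing α]

theorem fromBlocks_zero_zero_mem_unitaryGroup {A : Matrix m m α} {D : Matrix n n α}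
    (hA : A ∈ unitaryGroup m α) (hD : D ∈ unitaryGroup n α) :
    fromBlocks A 0 0 D ∈ unitaryGroup (m ⊕ n) α := by
  rw [mem_unitaryGroup_iff] at hA hD ⊢
  rw [star_eq_conjTranspose, fromBlocks_conjTranspose, fromBlocks_multiply, ← fromBlocks_one]
  simp only [conjTranspose_zero, ← star_eq_conjTranspose, hA, hD, Matrix.mul_zero,
    Matrix.zero_mul, add_zero, zero_add]

theorem fromBlocks_one_sub_mul_conjTranspose_mem_unitaryGroup {Y : Matrix m n α}
    (hY : Yᴴ * Y = 1) : fromBlocks (1 - Y * Yᴴ) Y Yᴴ 0 ∈ unitaryGroup (m ⊕ n) α := by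
  have hProj : Y * Yᴴ * (Y * Yᴴ) = Y * Yᴴ := by
    rw [Matrix.mul_assoc, ← Matrix.mul_assoc Yᴴ, hY, Matrix.one_mul]
  have hHerm : (fromBlocks (1 - Y * Yᴴ) Y Yᴴ 0).IsHermitian :=
    IsHermitian.fromBlocks (by simp [IsHermitian, conjTranspose_sub]) rfl isHermitian_zero
  refine hHerm.isSelfAdjoint.mem_unitary_of_mul_self_eq_one ?_
  rw [fromBlocks_multiply, ← fromBlocks_one]
  congr 1
  · simp [Matrix.sub_mul, Matrix.mul_sub, hProj]
  · simp [Matrix.sub_mul, Matrix.mul_assoc, hY]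
  · simp [Matrix.mul_sub, ← Matrix.mul_assoc, hY]
  · simp [hY]

end Matrix

theorem stmt_7 {n k : ℕ} (U : Matrix (Fin n) (Fin n) ℂ)
    (hU : U ∈ Matrix.unitaryGroup (Fin n) ℂ)
    (Y : Matrix (Fin n) (Fin k) ℂ) (hY : Yᴴ * Y = 1) :
    Matrix.fromBlocks (U - U * Y * Yᴴ) (U * Y) Yᴴ 0 ∈
      Matrix.unitaryGroup (Fin n ⊕ Fin k) ℂ := by
  have hFactor : Matrix.fromBlocks (U - U * Y * Yᴴ) (U * Y) Yᴴ 0 =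
      Matrix.fromBlocks U 0 0 1 * Matrix.fromBlocks (1 - Y * Yᴴ) Y Yᴴ 0 := by
    simp [Matrix.fromBlocks_multiply, Matrix.mul_sub, Matrix.mul_assoc]
  rw [hFactor]
  exact mul_mem (Matrix.fromBlocks_zero_zero_mem_unitaryGroup hU (one_mem _))
    (Matrix.fromBlocks_one_sub_mul_conjTranspose_mem_unitaryGroup hY)
end

section
/- Let L be a proper unitary k-lower Hessenberg matrix of size N = n+k, and let Q be a unitary upper Hessenberg matrix of the form diag(I_k, Q̂). Then the unitary matrix C = L·Q satisfies rank(C(h:N, 1:h+k-2)) ≤ k for all h = 2, ..., n+1. -/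
/-!
Split the rows of `L` at `h - 1`. Since `L` is `k`-lower Hessenberg, its first `h - 1` rows live
in the first `h + k - 1` columns, so restricted to those columns they stay orthonormal, and the
remaining rows restricted to the same columns are orthogonal to them; the latter block therefore
has rank at most `(h + k - 1) - (h - 1) = k`. Since `Q` is upper Hessenberg, its first `h + k - 2`
columns live in its first `h + k - 1` rows, so `C(h:N, 1:h+k-2)` factors through that block.
-/

open scoped Matrix

open Function

namespace Matrix

variable {l m n o p q c R : Type*}

theorem submatrix_mul_of_injective [Fintype n] [Fintype m] [NonUnitalNonAssocSemiring R]
    (A : Matrix l n R) (B : Matrix n o R) (f : p → l) {e : m → n} (he : Injective e)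
    (g : q → o) (hAB : ∀ i j x, x ∉ Set.range e → A (f i) x * B x (g j) = 0) :
    (A * B).submatrix f g = A.submatrix f e * B.submatrix e g :=
  ext fun i j => (Fintype.sum_of_injective e he _ _ (hAB i j) fun _ => rfl).symm

theorem rank_submatrix_add_card_le_of_mul_conjTranspose_eq_one [Fintype n] [Fintype m]
    [Fintype c] [Finite p] [DecidableEq n] [DecidableEq m] [Field R] [StarRing R]
    {U : Matrix n n R} (hU : U * Uᴴ = 1) {f : m → n} (hf : Injective f) {g : p → n}
    (hgf : ∀ i j, g i ≠ f j) {e : c → n} (he : Injective e)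
    (hsupp : ∀ i x, x ∉ Set.range e → U (f i) x = 0) :
    (U.submatrix g e).rank + Fintype.card m ≤ Fintype.card c := by
  have hcols : ∀ x, x ∉ Set.range e → ∀ j, Uᴴ x (f j) = 0 := fun x hx j => by
    rw [conjTranspose_apply, hsupp j x hx, star_zero]
  have hrows : U.submatrix f e * (U.submatrix f e)ᴴ = 1 := by
    rw [conjTranspose_submatrix, ← submatrix_mul_of_injective _ _ _ he _ fun i j x hx => by
      rw [hcols x hx j, mul_zero], hU, submatrix_one _ hf]
  have hortho : U.submatrix g e * (U.submatrix f e)ᴴ = 0 := by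
    rw [conjTranspose_submatrix, ← submatrix_mul_of_injective _ _ _ he _ fun i j x hx => by
      rw [hcols x hx j, mul_zero], hU]
    ext i j
    exact one_apply_ne (hgf i j)
  have hrank : Fintype.card m ≤ (U.submatrix f e)ᴴ.rank := by
    have := rank_mul_le_right (U.submatrix f e) (U.submatrix f e)ᴴ
    rwa [hrows, rank_one] at this
  have hsum := rank_add_rank_le_card_of_mul_eq_zero hortho
  omega

end Matrix

theorem stmt_9 {n k : ℕ} (hk : 1 ≤ k)
    (L Q : Matrix (Fin (n + k)) (Fin (n + k)) ℂ)
    (hL : L ∈ Matrix.unitaryGroup (Fin (n + k)) ℂ)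
    (hLhess : ∀ i j : Fin (n + k), (i : ℕ) + k < (j : ℕ) → L i j = 0)
    (hQhess : ∀ i j : Fin (n + k), (j : ℕ) + 1 < (i : ℕ) → Q i j = 0) :
    ∀ (hh : ℕ) (hh2 : 2 ≤ hh) (hhn : hh ≤ n + 1),
      (Matrix.of fun (i : Fin (n + k - hh + 1)) (j : Fin (hh + k - 2)) =>
        (L * Q) ⟨hh - 1 + (i : ℕ), by have := i.isLt; omega⟩
          ⟨(j : ℕ), by have := j.isLt; omega⟩).rank ≤ k := by
  intro hh hh2 hhn
  let upper : Fin (hh - 1) → Fin (n + k) := Fin.castLE (by omega)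
  let lower : Fin (n + k - hh + 1) → Fin (n + k) := fun i => ⟨hh - 1 + i, by omega⟩
  let band : Fin (hh + k - 1) → Fin (n + k) := Fin.castLE (by omega)
  let cols : Fin (hh + k - 2) → Fin (n + k) := Fin.castLE (by omega)
  have hband : ∀ x, x ∉ Set.range band → hh + k - 1 ≤ (x : ℕ) := by
    simp [band, Fin.range_castLE]
  have hfactor : (L * Q).submatrix lower cols = L.submatrix lower band * Q.submatrix band cols :=
    Matrix.submatrix_mul_of_injective L Q lower (Fin.castLE_injective _) cols fun i j x hx => by
      have hx' := hband x hx
      rw [hQhess x (cols j) (by simp only [cols, Fin.val_castLE]; omega), mul_zero]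
  have hrank := Matrix.rank_submatrix_add_card_le_of_mul_conjTranspose_eq_one
    (f := upper) (g := lower) (e := band) (Matrix.mem_unitaryGroup_iff.mp hL)
    (Fin.castLE_injective _)
    (fun i j => by simp only [lower, upper, ne_eq, Fin.ext_iff, Fin.val_castLE]; omega)
    (Fin.castLE_injective _)
    fun i x hx => hLhess (upper i) x <| by
      have hx' := hband x hx
      simp only [upper, Fin.val_castLE]; omega
  rw [Fintype.card_fin, Fintype.card_fin] at hrank
  change ((L * Q).submatrix lower cols).rank ≤ k
  rw [hfactor]
  exact (Matrix.rank_mul_le_left _ _).trans (by omega)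
end

section
/- Let L ∈ ℂ^{N×N} be a proper unitary k-lower Hessenberg matrix, R ∈ ℂ^{N×N} a unitary k-upper Hessenberg matrix, Q = diag(I_k, Q̂) unitary with Q̂ upper Hessenberg of size n = N−k, T_k a k×k nonsingular upper triangular matrix, T = [T_kᴴ; 0]ᵀ-style N×k matrix with top block T_k, and set Zᴴ = L(n+1:N, :)·Q and F = Q + T·Zᴴ. Then Â = L·F·R is upper Hessenberg with Â(n+1:N, :) = 0, i.e., Â = [[A, *],[0, 0]] for some upper Hessenberg A of size n. -/
/-!
Write `S = L(n+1:N, :)` for the last `k` rows of `L`, so that `L F = M Q` with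
`M = L (I + T S)`. The hypothesis on `L(n+1:N, 1:k)` says `S T = -I_k`; hence `M T = 0`, so
(as `T_k` is invertible) the first `k` columns of `M` vanish, and `S (I + T S) = 0`, so its last
`k` rows vanish. Moreover `M Lᴴ = I + L T (S Lᴴ)` has identity leading `n × n` block, since `S Lᴴ`
consists of the last `k` rows of the identity. As `L` is `k`-lower Hessenberg, the block
`Lᴴ(k+1:N, 1:n)` is upper triangular, and so is its inverse `M(1:n, k+1:N)`. Altogether
`M_{ia} = 0` for `a < i + k`, i.e. `M` has lower bandwidth `-k`; multiplying by `Q` (bandwidth `1`)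
and `R` (bandwidth `k`) gives bandwidth `1`, and the last `k` rows of `Â` vanish with those of `M`.
-/

open scoped Matrix

namespace Matrix

variable {R α m o ι κ : Type*}

/-- Upper Hessenberg is lower bandwidth `1`, `k`-upper Hessenberg is lower bandwidth `k`. -/
def HasLowerBandwidth [Zero R] {a b : ℕ} (A : Matrix (Fin a) (Fin b) R) (d : ℤ) : Prop :=
  ∀ (i : Fin a) (j : Fin b), (j : ℤ) + d < i → A i j = 0

theorem HasLowerBandwidth.mul [NonUnitalNonAssocSemiring R] {a b c : ℕ}
    {A : Matrix (Fin a) (Fin b) R} {B : Matrix (Fin b) (Fin c) R} {d e : ℤ}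
    (hA : A.HasLowerBandwidth d) (hB : B.HasLowerBandwidth e) :
    (A * B).HasLowerBandwidth (d + e) := by
  intro i j hij
  rw [mul_apply]
  refine Finset.sum_eq_zero fun x _ => ?_
  by_cases hx : (x : ℤ) + d < i
  · rw [hA i x hx, zero_mul]
  · rw [hB x j (by omega), mul_zero]

theorem mul_eq_submatrix_mul_submatrix [NonUnitalNonAssocSemiring R] [Fintype ι] [Fintype κ]
    (A : Matrix m ι R) (B : Matrix ι o R) {f : κ → ι} (hf : Function.Injective f)
    (h : ∀ c ∉ Set.range f, ∀ i j, A i c * B c j = 0) :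
    A * B = A.submatrix id f * B.submatrix f id := by
  ext i j
  exact (Fintype.sum_of_injective f hf _ _ (fun c hc => h c hc i j) fun _ => rfl).symm

theorem mul_eq_submatrix_castLE_mul_submatrix_castLE [NonUnitalNonAssocSemiring R] {k N : ℕ}
    (h : k ≤ N) (A : Matrix m (Fin N) R) {B : Matrix (Fin N) o R}
    (hB : ∀ c : Fin N, k ≤ (c : ℕ) → ∀ j, B c j = 0) :
    A * B = A.submatrix id (Fin.castLE h) * B.submatrix (Fin.castLE h) id := by
  refine mul_eq_submatrix_mul_submatrix A B (Fin.castLE_injective h) fun c hc i j => ?_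
  rw [Fin.range_castLE, Set.mem_ofPred_eq, not_lt] at hc
  rw [hB c hc j, mul_zero]

theorem BlockTriangular.of_mul_eq_one [CommRing R] [Fintype m] [DecidableEq m] [LinearOrder α]
    {B C : Matrix m m R} {b : m → α} (hC : C.BlockTriangular b) (h : B * C = 1) :
    B.BlockTriangular b := by
  have : Invertible C := invertibleOfLeftInverse _ _ h
  rw [← inv_eq_left_inv h]
  exact blockTriangular_inv_of_blockTriangular hC

theorem hasLowerBandwidth_neg_of_mul_conjTranspose [CommRing R] [StarRing R] {n k : ℕ}
    {L M : Matrix (Fin (n + k)) (Fin (n + k)) R} (hL : Lᴴ.HasLowerBandwidth k)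
    (hMcol : M.submatrix id (Fin.castLE (Nat.le_add_left k n)) = 0)
    (hMrow : M.submatrix (Fin.natAdd n) id = 0)
    (hML : (M * Lᴴ).submatrix (Fin.castAdd k) (Fin.castAdd k) = 1) :
    M.HasLowerBandwidth (-k) := by
  have hcol (i : Fin (n + k)) (c : Fin (n + k)) (hc : (c : ℕ) < k) : M i c = 0 :=
    congr_fun (congr_fun hMcol i) ⟨c, hc⟩
  set B := M.submatrix (Fin.castAdd k) (Fin.addNat · k)
  set C := Lᴴ.submatrix (Fin.addNat · k) (Fin.castAdd k)
  have hBC : B * C = 1 := by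
    have hinj : Function.Injective (Fin.addNat · k : Fin n → Fin (n + k)) :=
      fun _ _ h => (Fin.addNat_inj k).1 h
    rw [← hML, mul_eq_submatrix_mul_submatrix M Lᴴ hinj ?_]
    · rfl
    intro c hc i j
    suffices (c : ℕ) < k by rw [hcol i c this, zero_mul]
    by_contra! hkc
    exact hc ⟨⟨c - k, by omega⟩, Fin.ext (Nat.sub_add_cancel hkc)⟩
  have hC : C.BlockTriangular id := fun q r (hrq : r < q) => hL _ _ (by simp [Fin.lt_def.1 hrq])
  have hB : B.BlockTriangular id := hC.of_mul_eq_one hBC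
  intro i a hia
  rcases lt_or_ge (a : ℕ) k with hak | hak
  · exact hcol i a hak
  rcases lt_or_ge (i : ℕ) n with hin | hin
  · have ha : a = Fin.addNat ⟨a - k, by omega⟩ k := Fin.ext (Nat.sub_add_cancel hak).symm
    rw [ha]
    exact hB (show (⟨a - k, _⟩ : Fin n) < ⟨i, hin⟩ from Fin.mk_lt_mk.2 (by omega))
  · have hi : i = Fin.natAdd n ⟨i - n, by omega⟩ := Fin.ext (Nat.add_sub_cancel' hin).symm
    rw [hi]
    exact congr_fun (congr_fun hMrow _) a

theorem submatrix_castLE_eq_zero_of_mul_eq_zero [CommRing R] {k N : ℕ} (h : k ≤ N)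
    {A : Matrix m (Fin N) R} {B : Matrix (Fin N) (Fin k) R} (hAB : A * B = 0)
    (hB : ∀ c : Fin N, k ≤ (c : ℕ) → ∀ j, B c j = 0)
    (hdet : IsUnit (B.submatrix (Fin.castLE h) id).det) :
    A.submatrix id (Fin.castLE h) = 0 := by
  rw [mul_eq_submatrix_castLE_mul_submatrix_castLE h A hB] at hAB
  simpa [Matrix.mul_assoc, mul_nonsing_inv _ hdet] using
    congrArg (· * (B.submatrix (Fin.castLE h) id)⁻¹) hAB

end Matrix

open Matrix

section RankUpdate

variable {R : Type*} [CommRing R] {n k : ℕ} {L : Matrix (Fin (n + k)) (Fin (n + k)) R}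
  {T : Matrix (Fin (n + k)) (Fin k) R}

/-- `M = L (I + T L(n+1:N, :))`, so that `L (Q + T Zᴴ) = M Q` for `Zᴴ = L(n+1:N, :) Q`. -/
def rankUpdate (L : Matrix (Fin (n + k)) (Fin (n + k)) R) (T : Matrix (Fin (n + k)) (Fin k) R) :
    Matrix (Fin (n + k)) (Fin (n + k)) R :=
  L * (1 + T * L.submatrix (Fin.natAdd n) id)

theorem rankUpdate_mul_eq_zero (hLT : L.submatrix (Fin.natAdd n) id * T = -1) :
    rankUpdate L T * T = 0 := by
  rw [rankUpdate, Matrix.mul_assoc, Matrix.add_mul, Matrix.mul_assoc, hLT]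
  simp

theorem submatrix_natAdd_rankUpdate (hLT : L.submatrix (Fin.natAdd n) id * T = -1) :
    (rankUpdate L T).submatrix (Fin.natAdd n) id = 0 := by
  rw [rankUpdate, submatrix_mul _ _ _ id _ Function.bijective_id, submatrix_id_id, Matrix.mul_add,
    ← Matrix.mul_assoc, hLT]
  simp

theorem submatrix_castAdd_rankUpdate_mul_conjTranspose [StarRing R] (hL : L * Lᴴ = 1) :
    (rankUpdate L T * Lᴴ).submatrix (Fin.castAdd k) (Fin.castAdd k) = 1 := by
  have hLL :
      L.submatrix (Fin.natAdd n) id * Lᴴ = (1 : Matrix _ _ R).submatrix (Fin.natAdd n) id := by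
    rw [← hL, submatrix_mul _ _ _ id _ Function.bijective_id, submatrix_id_id]
  rw [rankUpdate, Matrix.mul_assoc, Matrix.add_mul, Matrix.one_mul, Matrix.mul_add, hL,
    Matrix.mul_assoc T, hLL]
  ext p r
  have hnr : ∀ s : Fin k, n + (s : ℕ) ≠ r := fun s => by omega
  simp [Matrix.mul_apply, Matrix.one_apply, Fin.ext_iff, hnr]

end RankUpdate

theorem stmt_10 {n k : ℕ}
    (L R Q : Matrix (Fin (n + k)) (Fin (n + k)) ℂ)
    (hL : L ∈ Matrix.unitaryGroup (Fin (n + k)) ℂ)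
    (hLhess : ∀ i j : Fin (n + k), (i : ℕ) + k < (j : ℕ) → L i j = 0)
    (hRhess : ∀ i j : Fin (n + k), (j : ℕ) + k < (i : ℕ) → R i j = 0)
    (hQhess : ∀ i j : Fin (n + k), (j : ℕ) + 1 < (i : ℕ) → Q i j = 0)
    (Tk : Matrix (Fin k) (Fin k) ℂ)
    (hTkUnit : IsUnit Tk.det)
    (T : Matrix (Fin (n + k)) (Fin k) ℂ)
    (hTtop : ∀ i j : Fin k, T (Fin.castLE (Nat.le_add_left k n) i) j = Tk i j)
    (hTbot : ∀ i : Fin (n + k), k ≤ (i : ℕ) → ∀ j, T i j = 0)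
    (hLbot : ∀ i j : Fin k, L ⟨n + (i : ℕ), by have := i.isLt; omega⟩ (Fin.castLE (Nat.le_add_left k n) j) = (-Tk⁻¹) i j) :
    ∀ Ahat : Matrix (Fin (n + k)) (Fin (n + k)) ℂ,
      Ahat = L * (Q + T * ((Matrix.of fun (i : Fin k) (j : Fin (n + k)) => L ⟨n + (i : ℕ), by have := i.isLt; omega⟩ j) * Q)) * R →
      (∀ i j : Fin (n + k), (j : ℕ) + 1 < (i : ℕ) → Ahat i j = 0) ∧
      (∀ i : Fin (n + k), n ≤ (i : ℕ) → ∀ j, Ahat i j = 0) := by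
  intro Ahat hAhat
  have hT : T.submatrix (Fin.castLE (Nat.le_add_left k n)) id = Tk := Matrix.ext hTtop
  have hLT : L.submatrix (Fin.natAdd n) id * T = -1 := by
    have hLk : (L.submatrix (Fin.natAdd n) id).submatrix id (Fin.castLE (Nat.le_add_left k n)) =
        -Tk⁻¹ := Matrix.ext hLbot
    rw [mul_eq_submatrix_castLE_mul_submatrix_castLE (Nat.le_add_left k n) _ hTbot, hT, hLk,
      neg_mul, nonsing_inv_mul _ hTkUnit]
  have hMband : (rankUpdate L T).HasLowerBandwidth (-k) :=
    hasLowerBandwidth_neg_of_mul_conjTranspose (fun i j h => by simp [hLhess j i (by omega)])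
      (submatrix_castLE_eq_zero_of_mul_eq_zero _ (rankUpdate_mul_eq_zero hLT) hTbot
        (hT ▸ hTkUnit))
      (submatrix_natAdd_rankUpdate hLT)
      (submatrix_castAdd_rankUpdate_mul_conjTranspose (mem_unitaryGroup_iff.1 hL))
  have hA : Ahat = rankUpdate L T * Q * R := by
    rw [hAhat, rankUpdate]
    simp only [Matrix.mul_add, Matrix.add_mul, Matrix.mul_one, Matrix.mul_assoc]
    rfl
  subst hA
  have hQband : Q.HasLowerBandwidth 1 := fun i j h => hQhess i j (by omega)
  have hRband : R.HasLowerBandwidth k := fun i j h => hRhess i j (by omega)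
  refine ⟨fun i j hij => (hMband.mul hQband).mul hRband i j (by omega), fun i hi j => ?_⟩
  rw [Matrix.mul_assoc, Matrix.mul_apply]
  exact Finset.sum_eq_zero fun a _ => by rw [hMband i a (by omega), zero_mul]
end

section
/- Let Â = Û + X̂Ŷᴴ ∈ ℂ^{N×N} be block upper triangular of the form [[A, B],[0, 0]] with A ∈ ℂ^{n×n}, and let p_d be a monic polynomial of degree d. If P is the unitary factor of a QR factorization of p_d(Â), then P can be chosen block diagonal, P = diag(P_1, P_2) with P_1 ∈ ℂ^{n×n} and P_2 ∈ ℂ^{k×k} unitary, and consequently Â^{(1)} = Pᴴ Â P has the block form [[A^{(1)}, B^{(1)}],[0, 0]] where A^{(1)} = P_1ᴴ A P_1. -/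
/-!
`p(Â)` is again block upper triangular, with top-left block `p(A)` and bottom-right block
the scalar matrix `p(0)`. A QR factorization `p(A) = Q R₁` therefore extends to
`p(Â) = diag(Q, 1) * [[R₁, Qᴴ C], [0, p(0)]]` with an upper triangular right factor, and
conjugating `Â` by a block diagonal unitary keeps its zero block row.
-/

open scoped Matrix
open Polynomial

namespace Matrix

variable {R α l m : Type*}

theorem BlockTriangular.fromBlocks_zero [Zero R] [LT α] {A : Matrix l l R} {B : Matrix l m R}
    {D : Matrix m m R} {b₁ : l → α} {b₂ : m → α} (hA : A.BlockTriangular b₁)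
    (hD : D.BlockTriangular b₂) (hb : ∀ i j, ¬b₂ j < b₁ i) :
    (fromBlocks A B 0 D).BlockTriangular (Sum.elim b₁ b₂) := by
  rintro (i | i) (j | j) hij
  · exact hA hij
  · exact absurd hij (hb i j)
  · rfl
  · exact hD hij

theorem exists_aeval_fromBlocks_zero [CommRing R] [Fintype l] [Fintype m] [DecidableEq l]
    [DecidableEq m] (A : Matrix l l R) (B : Matrix l m R) (D : Matrix m m R) (p : R[X]) :
    ∃ C : Matrix l m R, aeval (fromBlocks A B 0 D) p = fromBlocks (aeval A p) C 0 (aeval D p) := by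
  induction p using Polynomial.induction_on with
  | C a => exact ⟨0, by simp [Algebra.algebraMap_eq_smul_one, ← fromBlocks_one, fromBlocks_smul]⟩
  | add p q hp hq =>
    obtain ⟨Cp, hCp⟩ := hp
    obtain ⟨Cq, hCq⟩ := hq
    exact ⟨Cp + Cq, by simp [hCp, hCq, fromBlocks_add]⟩
  | monomial j a ih =>
    obtain ⟨C, hC⟩ := ih
    refine ⟨aeval A (Polynomial.C a * X ^ j) * B + C * D, ?_⟩
    have hX : Polynomial.C a * X ^ (j + 1) = Polynomial.C a * X ^ j * X := by ring
    simp only [hX, map_mul, aeval_X, hC, fromBlocks_multiply]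
    simp

variable {𝕜 ι : Type*} [RCLike 𝕜] [Fintype ι] [DecidableEq ι] [LinearOrder ι]
  [LocallyFiniteOrderBot ι] [WellFoundedLT ι]

/-- QR decomposition: Gram–Schmidt on the columns of `M` gives the unitary factor, and the
coordinates of the columns in the resulting orthonormal basis give the triangular one. -/
theorem exists_mem_unitaryGroup_mul_isUpperTriangular (M : Matrix ι ι 𝕜) :
    ∃ Q ∈ unitaryGroup ι 𝕜, ∃ R : Matrix ι ι 𝕜, R.IsUpperTriangular ∧ M = Q * R := by
  let e := EuclideanSpace.basisFun ι 𝕜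
  let cols : ι → EuclideanSpace 𝕜 ι := fun j => WithLp.toLp 2 (fun i => M i j)
  let q := InnerProductSpace.gramSchmidtOrthonormalBasis finrank_euclideanSpace cols
  refine ⟨e.toBasis.toMatrix q, e.toMatrix_orthonormalBasis_mem_unitary q,
    q.toBasis.toMatrix cols,
    InnerProductSpace.gramSchmidtOrthonormalBasis_inv_isUpperTriangular _ cols, ?_⟩
  rw [← q.coe_toBasis, Module.Basis.toMatrix_mul_toMatrix]
  ext i j
  simp [Module.Basis.toMatrix_apply, e, cols]

end Matrix

open Matrix

theorem stmt_14_general {n k : ℕ} (A : Matrix (Fin n) (Fin n) ℂ) (B : Matrix (Fin n) (Fin k) ℂ)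
    (p : Polynomial ℂ) :
    ∃ (P₁ : Matrix (Fin n) (Fin n) ℂ) (P₂ : Matrix (Fin k) (Fin k) ℂ)
      (R : Matrix (Fin n ⊕ Fin k) (Fin n ⊕ Fin k) ℂ),
      P₁ ∈ Matrix.unitaryGroup (Fin n) ℂ ∧ P₂ ∈ Matrix.unitaryGroup (Fin k) ℂ ∧
      (∀ i j : Fin n ⊕ Fin k,
        (Sum.elim (fun a : Fin n => (a : ℕ)) (fun b : Fin k => n + (b : ℕ)) j <
          Sum.elim (fun a : Fin n => (a : ℕ)) (fun b : Fin k => n + (b : ℕ)) i) → R i j = 0) ∧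
      Polynomial.aeval (Matrix.fromBlocks A B 0 0) p =
        Matrix.fromBlocks P₁ 0 0 P₂ * R ∧
      ∃ B' : Matrix (Fin n) (Fin k) ℂ,
        (Matrix.fromBlocks P₁ 0 0 P₂)ᴴ * Matrix.fromBlocks A B 0 0 *
            Matrix.fromBlocks P₁ 0 0 P₂ =
          Matrix.fromBlocks (P₁ᴴ * A * P₁) B' 0 0 := by
  obtain ⟨C, hC⟩ := exists_aeval_fromBlocks_zero A B 0 p
  obtain ⟨Q, hQ, R₁, hR₁, hQR⟩ := exists_mem_unitaryGroup_mul_isUpperTriangular (aeval A p)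
  have hD : (aeval (0 : Matrix (Fin k) (Fin k) ℂ) p).BlockTriangular fun b => n + (b : ℕ) := by
    rw [← map_zero (algebraMap ℂ _), aeval_algebraMap_apply]
    exact blockTriangular_algebraMap _
  have hR : (fromBlocks R₁ (Qᴴ * C) 0 (aeval 0 p)).BlockTriangular
      (Sum.elim (fun a : Fin n => (a : ℕ)) (fun b : Fin k => n + (b : ℕ))) :=
    BlockTriangular.fromBlocks_zero (fun _ _ h => hR₁ h) hD (fun _ _ => by omega)
  refine ⟨Q, 1, _, hQ, one_mem _, fun _ _ h => hR h, ?_, Qᴴ * B, ?_⟩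
  · have hQQ : Q * Qᴴ = 1 := mem_unitaryGroup_iff.mp hQ
    simp [hC, hQR, fromBlocks_multiply, ← Matrix.mul_assoc, hQQ]
  · simp [fromBlocks_conjTranspose, fromBlocks_multiply, mul_assoc]

theorem stmt_14 {n k : ℕ} (A : Matrix (Fin n) (Fin n) ℂ) (B : Matrix (Fin n) (Fin k) ℂ)
    (p : Polynomial ℂ) (hp : p.Monic) :
    ∃ (P₁ : Matrix (Fin n) (Fin n) ℂ) (P₂ : Matrix (Fin k) (Fin k) ℂ)
      (R : Matrix (Fin n ⊕ Fin k) (Fin n ⊕ Fin k) ℂ),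
      P₁ ∈ Matrix.unitaryGroup (Fin n) ℂ ∧ P₂ ∈ Matrix.unitaryGroup (Fin k) ℂ ∧
      (∀ i j : Fin n ⊕ Fin k,
        (Sum.elim (fun a : Fin n => (a : ℕ)) (fun b : Fin k => n + (b : ℕ)) j <
          Sum.elim (fun a : Fin n => (a : ℕ)) (fun b : Fin k => n + (b : ℕ)) i) → R i j = 0) ∧
      Polynomial.aeval (Matrix.fromBlocks A B 0 0) p =
        Matrix.fromBlocks P₁ 0 0 P₂ * R ∧
      ∃ B' : Matrix (Fin n) (Fin k) ℂ,
        (Matrix.fromBlocks P₁ 0 0 P₂)ᴴ * Matrix.fromBlocks A B 0 0 *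
            Matrix.fromBlocks P₁ 0 0 P₂ =
          Matrix.fromBlocks (P₁ᴴ * A * P₁) B' 0 0 :=
  stmt_14_general A B p
end
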